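/- arXiv:1906.06922 — 4 statements merged into one kernel-verified Lean document; each statement's English description precedes it below -/
import Mathlib

section
/- Let N ≥ 2, γ > 0, m_b > 0, δP ∈ ℝ. For each α ∈ {2, …, N} let λ_α > γ²/4, u_{αb} ∈ ℝ, set 𝒫_α = u_{αb}·δP/√(m_b) and f_α = √(4λ_α − γ²). Then ∫₀^∞ Σ_{α=2}^{N} [(2𝒫_α/f_α)·e^{−γt/2}·sin(f_α t/2)]² dt = (δP²/(2γ m_b))·Σ_{α=2}^{N} u_{αb}²/λ_α. -/
/-!
Interchanging the finite sum with the integral reduces the claim to one mode at a time.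
For a single mode, `t ↦ exp (-γ t) sin² (f t / 2)` has an explicit antiderivative built from
`sin² x = (1 - cos 2x) / 2`, which vanishes at infinity, so
`∫₀^∞ exp (-γ t) sin² (f t / 2) dt = f² / (2γ (γ² + f²))`.
With `f² = 4λ - γ²` the denominator becomes `8γλ`, and the amplitude `(2𝒫/f)²` cancels `f²`,
leaving `𝒫² / (2γλ)`.
-/

open MeasureTheory Real Set Filter

section DampedSine

variable {γ : ℝ}

lemma integrableOn_exp_neg_mul_mul_sin_sq (hγ : 0 < γ) (f : ℝ) :
    IntegrableOn (fun t => exp (-γ * t) * sin (f * t / 2) ^ 2) (Ioi 0) := by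
  refine (exp_neg_integrableOn_Ioi 0 hγ).mono' (by fun_prop) (ae_of_all _ fun t => ?_)
  rw [norm_mul, norm_of_nonneg (exp_pos _).le, norm_of_nonneg (sq_nonneg _)]
  exact mul_le_of_le_one_right (exp_pos _).le (sin_sq_le_one _)

lemma tendsto_exp_neg_mul_mul_trig_atTop (hγ : 0 < γ) (a b c f : ℝ) :
    Tendsto (fun t => exp (-γ * t) * (a + b * sin (f * t) + c * cos (f * t))) atTop (nhds 0) := by
  have hexp : Tendsto (fun t => exp (-γ * t)) atTop (nhds 0) :=
    tendsto_exp_atBot.comp (tendsto_id.const_mul_atTop_of_neg (neg_neg_of_pos hγ))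
  refine squeeze_zero_norm (fun t => ?_)
    (by simpa only [zero_mul] using hexp.mul_const (|a| + |b| + |c|))
  rw [norm_mul, norm_of_nonneg (exp_pos _).le]
  refine mul_le_mul_of_nonneg_left ?_ (exp_pos _).le
  calc ‖a + b * sin (f * t) + c * cos (f * t)‖
      ≤ |a| + |b| * |sin (f * t)| + |c| * |cos (f * t)| := by
        simp only [Real.norm_eq_abs, ← abs_mul]; exact abs_add_three _ _ _
    _ ≤ |a| + |b| + |c| := by
        gcongr
        · exact mul_le_of_le_one_right (abs_nonneg _) (abs_sin_le_one _)
        · exact mul_le_of_le_one_right (abs_nonneg _) (abs_cos_le_one _)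

/-- An antiderivative of `t ↦ exp (-γ t) sin² (f t / 2)`, from `sin² x = (1 - cos 2x) / 2`. -/
noncomputable def expNegMulSinSqPrimitive (γ f t : ℝ) : ℝ :=
  exp (-γ * t) * (-(1 / (2 * γ)) + -(f / (2 * (γ ^ 2 + f ^ 2))) * sin (f * t)
    + γ / (2 * (γ ^ 2 + f ^ 2)) * cos (f * t))

lemma hasDerivAt_expNegMulSinSqPrimitive (hγ : γ ≠ 0) (f t : ℝ) :
    HasDerivAt (expNegMulSinSqPrimitive γ f) (exp (-γ * t) * sin (f * t / 2) ^ 2) t := by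
  have hD : γ ^ 2 + f ^ 2 ≠ 0 := by positivity
  have hlin : ∀ k : ℝ, HasDerivAt (fun t : ℝ => k * t) k t := fun k => by
    simpa using (hasDerivAt_id t).const_mul k
  have h := (hlin (-γ)).exp.mul
    (((((hlin f).sin).const_mul (-(f / (2 * (γ ^ 2 + f ^ 2))))).const_add (-(1 / (2 * γ)))).add
      (((hlin f).cos).const_mul (γ / (2 * (γ ^ 2 + f ^ 2)))))
  refine h.congr_deriv ?_
  simp only [Pi.add_apply]
  rw [sin_sq_eq_half_sub, show 2 * (f * t / 2) = f * t by ring]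
  field_simp
  ring

lemma integral_exp_neg_mul_mul_sin_sq (hγ : 0 < γ) (f : ℝ) :
    ∫ t in Ioi 0, exp (-γ * t) * sin (f * t / 2) ^ 2 = f ^ 2 / (2 * γ * (γ ^ 2 + f ^ 2)) := by
  have hD : γ ^ 2 + f ^ 2 ≠ 0 := by positivity
  rw [integral_Ioi_of_hasDerivAt_of_tendsto'
    (fun t _ => hasDerivAt_expNegMulSinSqPrimitive hγ.ne' f t)
    (integrableOn_exp_neg_mul_mul_sin_sq hγ f) (tendsto_exp_neg_mul_mul_trig_atTop hγ _ _ _ f)]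
  simp only [expNegMulSinSqPrimitive, mul_zero, exp_zero, sin_zero, cos_zero]
  field_simp
  ring

lemma sq_mul_exp_mul_sin (c γ f t : ℝ) :
    (c * exp (-γ * t / 2) * sin (f * t / 2)) ^ 2
      = c ^ 2 * (exp (-γ * t) * sin (f * t / 2) ^ 2) := by
  rw [show exp (-γ * t) = exp (-γ * t / 2) ^ 2 by rw [← exp_nat_mul]; ring_nf]
  ring

lemma integrableOn_sq_mul_exp_mul_sin (hγ : 0 < γ) (c f : ℝ) :
    IntegrableOn (fun t => (c * exp (-γ * t / 2) * sin (f * t / 2)) ^ 2) (Ioi 0) := by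
  simp only [sq_mul_exp_mul_sin]
  exact (integrableOn_exp_neg_mul_mul_sin_sq hγ f).const_mul (c ^ 2)

lemma integral_sq_mul_exp_mul_sin (hγ : 0 < γ) (c f : ℝ) :
    ∫ t in Ioi 0, (c * exp (-γ * t / 2) * sin (f * t / 2)) ^ 2
      = c ^ 2 * (f ^ 2 / (2 * γ * (γ ^ 2 + f ^ 2))) := by
  simp only [sq_mul_exp_mul_sin, integral_const_mul, integral_exp_neg_mul_mul_sin_sq hγ]

lemma integral_sq_underdamped_mode (hγ : 0 < γ) {lam f : ℝ} (hlam : γ ^ 2 / 4 < lam)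
    (hf : f = √(4 * lam - γ ^ 2)) (p : ℝ) :
    ∫ t in Ioi 0, (2 * p / f * exp (-γ * t / 2) * sin (f * t / 2)) ^ 2
      = p ^ 2 / (2 * γ * lam) := by
  have hpos : 0 < 4 * lam - γ ^ 2 := by linarith
  have hlam0 : lam ≠ 0 := (lt_of_le_of_lt (by positivity) hlam).ne'
  have hf0 : f ≠ 0 := hf ▸ (sqrt_pos.mpr hpos).ne'
  have hfsq : f ^ 2 = 4 * lam - γ ^ 2 := hf ▸ sq_sqrt hpos.le
  rw [integral_sq_mul_exp_mul_sin hγ, div_pow, hfsq]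
  field_simp
  ring

end DampedSine

theorem stmt_2_general (N : ℕ) (γ mb δP : ℝ) (hγ : 0 < γ) (hmb : 0 < mb)
    (lam u : ℕ → ℝ) (hlam : ∀ α ∈ Finset.Icc 2 N, γ ^ 2 / 4 < lam α)
    (P f : ℕ → ℝ)
    (hP : ∀ α, P α = u α * δP / Real.sqrt mb)
    (hf : ∀ α, f α = Real.sqrt (4 * lam α - γ ^ 2)) :
    ∫ t in Set.Ioi (0 : ℝ),
        ∑ α ∈ Finset.Icc 2 N,
          ((2 * P α / f α) * Real.exp (-γ * t / 2) * Real.sin (f α * t / 2)) ^ 2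
      = (δP ^ 2 / (2 * γ * mb)) * ∑ α ∈ Finset.Icc 2 N, (u α) ^ 2 / lam α := by
  rw [integral_finsetSum _ fun α _ => integrableOn_sq_mul_exp_mul_sin hγ _ _, Finset.mul_sum]
  refine Finset.sum_congr rfl fun α hα => ?_
  have hlam0 : lam α ≠ 0 := (lt_of_le_of_lt (by positivity) (hlam α hα)).ne'
  rw [integral_sq_underdamped_mode hγ (hlam α hα) (hf α), hP α, div_pow, mul_pow,
    sq_sqrt hmb.le]
  field_simp

/-- Proposition 2 of the paper: for an abrupt power loss `δP` at a single bus `b`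
with inertia `m_b` and homogeneous damping ratio `γ`, the performance measure
`𝓜_b = ∫₀^∞ Σ_{α=2}^N [(2𝒫_α/f_α)·e^{−γt/2}·sin(f_α t/2)]² dt` equals
`(δP²/(2γ m_b))·Σ_{α=2}^N u_{αb}²/λ_α`, where `𝒫_α = u_{αb}·δP/√(m_b)` and
`f_α = √(4λ_α − γ²)` (underdamped case `4λ_α > γ²`). -/
theorem stmt_2 (N : ℕ) (hN : 2 ≤ N) (γ mb δP : ℝ) (hγ : 0 < γ) (hmb : 0 < mb)
    (lam u : ℕ → ℝ) (hlam : ∀ α ∈ Finset.Icc 2 N, γ ^ 2 / 4 < lam α)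
    (P f : ℕ → ℝ)
    (hP : ∀ α, P α = u α * δP / Real.sqrt mb)
    (hf : ∀ α, f α = Real.sqrt (4 * lam α - γ ^ 2)) :
    ∫ t in Set.Ioi (0 : ℝ),
        ∑ α ∈ Finset.Icc 2 N,
          ((2 * P α / f α) * Real.exp (-γ * t / 2) * Real.sin (f α * t / 2)) ^ 2
      = (δP ^ 2 / (2 * γ * mb)) * ∑ α ∈ Finset.Icc 2 N, (u α) ^ 2 / lam α :=
  stmt_2_general N γ mb δP hγ hmb lam u hlam P f hP hf
end

section
/- Let N ∈ ℕ, k = ⌊N/2⌋, and let ρ : Fin N → ℝ. Let σ be a permutation of Fin N such that ρ∘σ is monotone nondecreasing. Define r* : Fin N → ℝ by r*_{σ(i)} = 1 for i < k, r*_{σ(i)} = −1 for i ≥ N − k, and r*_{σ(i)} = 0 otherwise. Then |r*_i| ≤ 1 for all i, Σ_i r*_i = 0, and for every r : Fin N → ℝ with |r_i| ≤ 1 for all i and Σ_i r_i = 0, it holds that Σ_i ρ_i·r*_i ≤ Σ_i ρ_i·r_i. -/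
/-- Mathematical core of Theorems 1 and 2 of the paper: sorting the
sensitivities `ρ_i` in ascending order (via the permutation `σ`) and setting
`r* = +1` on the smallest `⌊N/2⌋` of them, `r* = −1` on the largest `⌊N/2⌋`,
and `0` in between, solves the linear program
`min Σ_i ρ_i r_i` subject to `|r_i| ≤ 1` and `Σ_i r_i = 0`. -/
theorem stmt_11 (N : ℕ) (k : ℕ) (hk : k = N / 2)
    (ρ : Fin N → ℝ) (σ : Equiv.Perm (Fin N))
    (hmono : Monotone (ρ ∘ σ))
    (rstar : Fin N → ℝ)
    (hrstar : ∀ i : Fin N, rstar (σ i) =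
      if (i : ℕ) < k then (1 : ℝ) else if N - k ≤ (i : ℕ) then -1 else 0) :
    (∀ i, |rstar i| ≤ 1) ∧ (∑ i, rstar i = 0) ∧
    (∀ r : Fin N → ℝ, (∀ i, |r i| ≤ 1) → (∑ i, r i = 0) →
      ∑ i, ρ i * rstar i ≤ ∑ i, ρ i * r i) := by
  set t : Fin N → ℝ := fun i => if (i : ℕ) < k then (1:ℝ) else if N - k ≤ (i:ℕ) then -1 else 0 with ht
  have hrt : ∀ i : Fin N, rstar (σ i) = t i := fun i => hrstar i
  have habs : ∀ j : Fin N, |t j| ≤ 1 := by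
    intro j; simp only [ht]
    split_ifs <;> simp
  have hkk : k ≤ N - k := by omega
  have hNk : N - k ≤ N := by omega
  have hsumt : ∑ i : Fin N, t i = 0 := by
    have h1 : ∑ i : Fin N, t i
        = ∑ i ∈ Finset.range N, (if i < k then (1:ℝ) else if N - k ≤ i then -1 else 0) := by
      rw [Finset.sum_range fun i => (if i < k then (1:ℝ) else if N - k ≤ i then -1 else 0)]
    rw [h1, Finset.range_eq_Ico,
      ← Finset.sum_Ico_consecutive _ (Nat.zero_le (N - k)) hNk,
      ← Finset.sum_Ico_consecutive _ (Nat.zero_le k) hkk]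
    have e1 : ∑ i ∈ Finset.Ico 0 k, (if i < k then (1:ℝ) else if N - k ≤ i then -1 else 0) = k := by
      rw [Finset.sum_congr rfl (fun i hi => by
        simp only [Finset.mem_Ico] at hi
        rw [if_pos hi.2])]
      simp
    have e2 : ∑ i ∈ Finset.Ico k (N - k),
        (if i < k then (1:ℝ) else if N - k ≤ i then -1 else 0) = 0 := by
      rw [Finset.sum_congr rfl (fun i hi => by
        simp only [Finset.mem_Ico] at hi
        rw [if_neg (by omega), if_neg (by omega)])]
      simp
    have e3 : ∑ i ∈ Finset.Ico (N - k) N,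
        (if i < k then (1:ℝ) else if N - k ≤ i then -1 else 0) = -(k:ℝ) := by
      rw [Finset.sum_congr rfl (fun i hi => by
        simp only [Finset.mem_Ico] at hi
        rw [if_neg (by omega), if_pos hi.1])]
      have : N - (N - k) = k := by omega
      simp [Nat.card_Ico, this]
    rw [e1, e2, e3]; ring
  refine ⟨?_, ?_, ?_⟩
  · intro i
    have : rstar i = t (σ.symm i) := by
      have := hrt (σ.symm i); simpa using this
    rw [this]; exact habs _
  · calc ∑ i, rstar i = ∑ i, rstar (σ i) := (Equiv.sum_comp σ rstar).symm
      _ = ∑ i, t i := Finset.sum_congr rfl fun i _ => hrt i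
      _ = 0 := hsumt
  · intro r hr hsum
    rcases Nat.eq_zero_or_pos N with h0 | hpos
    · subst h0; simp
    have hkN : k < N := by omega
    set p : Fin N := ⟨k, hkN⟩ with hp
    set m : ℝ := ρ (σ p) with hm
    have hterm : ∀ i : Fin N, m * (r (σ i) - t i) ≤ ρ (σ i) * (r (σ i) - t i) := by
      intro i
      have habsr := (abs_le.mp (hr (σ i)))
      by_cases h1 : (i : ℕ) < k
      · have htv : t i = 1 := by simp only [ht]; rw [if_pos h1]
        have hle : ρ (σ i) ≤ m := hmono (show i ≤ p from Fin.le_def.mpr (by simp [hp]; omega))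
        have hd : r (σ i) - t i ≤ 0 := by rw [htv]; linarith [habsr.2]
        exact mul_le_mul_of_nonpos_right hle hd
      · by_cases h2 : N - k ≤ (i : ℕ)
        · have htv : t i = -1 := by simp only [ht]; rw [if_neg h1, if_pos h2]
          have hle : m ≤ ρ (σ i) := hmono (show p ≤ i from Fin.le_def.mpr (by simp [hp]; omega))
          have hd : 0 ≤ r (σ i) - t i := by rw [htv]; linarith [habsr.1]
          exact mul_le_mul_of_nonneg_right hle hd
        · have : i = p := by
            apply Fin.ext; simp [hp]; omega
          rw [this]
    have hsums : ∑ i, r (σ i) = 0 := by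
      rw [Equiv.sum_comp σ r]; exact hsum
    have h0 : (0:ℝ) ≤ ∑ i, ρ (σ i) * (r (σ i) - t i) := by
      have := Finset.sum_le_sum (s := Finset.univ) (fun i _ => hterm i)
      calc (0:ℝ) = ∑ i, m * (r (σ i) - t i) := by
            rw [← Finset.mul_sum, Finset.sum_sub_distrib, hsums, hsumt]; ring
        _ ≤ _ := this
    have hsplit : ∑ i, ρ (σ i) * (r (σ i) - t i)
        = ∑ i, ρ (σ i) * r (σ i) - ∑ i, ρ (σ i) * t i := by
      rw [← Finset.sum_sub_distrib]
      exact Finset.sum_congr rfl fun i _ => by ring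
    have hkey : ∑ i, ρ (σ i) * t i ≤ ∑ i, ρ (σ i) * r (σ i) := by
      rw [hsplit] at h0; linarith
    calc ∑ i, ρ i * rstar i = ∑ i, ρ (σ i) * rstar (σ i) :=
          (Equiv.sum_comp σ (fun i => ρ i * rstar i)).symm
      _ = ∑ i, ρ (σ i) * t i := Finset.sum_congr rfl fun i _ => by rw [hrt i]
      _ ≤ ∑ i, ρ (σ i) * r (σ i) := hkey
      _ = ∑ i, ρ i * r i := Equiv.sum_comp σ (fun i => ρ i * r i)
end

section
/- Let N ≥ 1, γ > 0, λ_α > γ²/4 for α = 1, …, N, f_α = √(4λ_α − γ²), μ_{α±} = −(γ ∓ if_α)/2 ∈ ℂ. Let H₀ be the 2N×2N complex matrix [[0_{N×N}, I_N], [−Λ, −γI_N]] with Λ = diag(λ_α). For s ∈ {+1, −1}, let t^{(0)L}_{αs} be the row vector with entries (i·s/f_α)·μ_{α,−s} in position α and −i·s/f_α in position N+α (zero elsewhere), and t^{(0)R}_{αs} the column vector with entry 1 in position α and μ_{αs} in position N+α (zero elsewhere). Let V₂ be a real symmetric N×N matrix and W = [[0_{N×N}, 0_{N×N}], [0_{N×N},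 −δγ·V₂]] for δγ ∈ ℝ. Then t^{(0)L}_{αs}·H₀·t^{(0)R}_{αs'} = μ_{αs}·δ_{ss'} for s, s' ∈ {+1, −1}, and t^{(0)L}_{αs}·W·t^{(0)R}_{αs} = −δγ·(1/2 + i·s·γ/(2f_α))·(V₂)_{αα}. -/
open Matrix

/-!
Both `t^{(0)L}_{αs}` and `t^{(0)R}_{αs'}` are supported on the coordinate pair `(α, N+α)`, so each
sandwich collapses to a `2 × 2` computation with the `α`-th blocks. For `H₀` that block is
`[[0, 1], [−λ_α, −γ]]`, the companion matrix of `x² + γx + λ_α = (x − μ_{α+})(x − μ_{α−})`; the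
columns `(1, μ)` are its right eigenvectors, and since `i s / f_α = 1 / (μ_{α,−s} − μ_{αs})` the row
`t^{(0)L}_{αs}` is the left eigenvector of `μ_{αs}` normalised against them.
-/

section PairSupported

variable {m n R : Type*}

theorem eq_sumElim_single [DecidableEq m] [DecidableEq n] [Zero R] {v : m ⊕ n → R}
    {i : m} {j : n} {a b : R}
    (hl : ∀ k, v (Sum.inl k) = if k = i then a else 0)
    (hr : ∀ k, v (Sum.inr k) = if k = j then b else 0) :
    v = Sum.elim (Pi.single i a) (Pi.single j b) := by
  ext (k | k) <;> simp [hl, hr, Pi.single_apply]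

variable [NonUnitalNonAssocSemiring R]

theorem vec2_dotProduct_mulVec_vec2 (l₁ l₂ a b c d r₁ r₂ : R) :
    ![l₁, l₂] ⬝ᵥ !![a, b; c, d] *ᵥ ![r₁, r₂] =
      l₁ * (a * r₁ + b * r₂) + l₂ * (c * r₁ + d * r₂) := by
  simp

theorem sumElim_single_dotProduct_fromBlocks_mulVec_sumElim_single [Fintype m] [Fintype n]
    [DecidableEq m] [DecidableEq n]
    (A : Matrix m m R) (B : Matrix m n R) (C : Matrix n m R) (D : Matrix n n R)
    (i i' : m) (j j' : n) (l₁ l₂ r₁ r₂ : R) :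
    Sum.elim (Pi.single i l₁) (Pi.single j l₂) ⬝ᵥ
        fromBlocks A B C D *ᵥ Sum.elim (Pi.single i' r₁) (Pi.single j' r₂) =
      ![l₁, l₂] ⬝ᵥ !![A i i', B i j'; C j i', D j j'] *ᵥ ![r₁, r₂] := by
  rw [fromBlocks_mulVec, sumElim_dotProduct_sumElim, single_dotProduct, single_dotProduct,
    vec2_dotProduct_mulVec_vec2]
  simp [mulVec_single]

end PairSupported

section Companion

variable {K : Type*} [Field K] {μ μ' c : K}

theorem companion_sandwich_self (hc : c * (μ' - μ) = 1) :
    ![c * μ', -c] ⬝ᵥ !![0, 1; -(μ * μ'), μ + μ'] *ᵥ ![1, μ] = μ := by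
  rw [vec2_dotProduct_mulVec_vec2]
  linear_combination μ * hc

theorem companion_sandwich_other (c : K) :
    ![c * μ', -c] ⬝ᵥ !![0, 1; -(μ * μ'), μ + μ'] *ᵥ ![1, μ'] = 0 := by
  rw [vec2_dotProduct_mulVec_vec2]
  ring

end Companion

section DampedMode

open Complex

noncomputable def dampedMode (γ f s : ℂ) : ℂ := -(γ - I * s * f) / 2

variable {γ f s : ℂ}

theorem I_mul_sq_of_sq_eq_one (hs : s ^ 2 = 1) : (I * s) ^ 2 = -1 := by
  rw [mul_pow, I_sq, hs, neg_one_mul]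

theorem dampedMode_add_dampedMode_neg : dampedMode γ f s + dampedMode γ f (-s) = -γ := by
  unfold dampedMode
  ring

theorem dampedMode_mul_dampedMode_neg {l : ℂ} (hs : s ^ 2 = 1) (hf : f ^ 2 = 4 * l - γ ^ 2) :
    dampedMode γ f s * dampedMode γ f (-s) = l := by
  unfold dampedMode
  linear_combination (-f ^ 2 / 4) * I_mul_sq_of_sq_eq_one hs + hf / 4

theorem div_mul_dampedMode_neg_sub_dampedMode (hs : s ^ 2 = 1) (hf : f ≠ 0) :
    I * s / f * (dampedMode γ f (-s) - dampedMode γ f s) = 1 := by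
  unfold dampedMode
  rw [div_mul_eq_mul_div, div_eq_one_iff_eq hf]
  linear_combination (-f) * I_mul_sq_of_sq_eq_one hs

theorem div_mul_dampedMode (hs : s ^ 2 = 1) (hf : f ≠ 0) :
    I * s / f * dampedMode γ f s = -(1 / 2 + I * s * γ / (2 * f)) := by
  unfold dampedMode
  field_simp
  linear_combination f * I_mul_sq_of_sq_eq_one hs

end DampedMode

theorem stmt_14_general (N : ℕ) (γ : ℝ)
    (lam : Fin N → ℝ) (hlam : ∀ α, γ ^ 2 / 4 < lam α)
    (f : Fin N → ℝ) (hf : ∀ α, f α = Real.sqrt (4 * lam α - γ ^ 2))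
    (mu : Fin N → ℝ → ℂ)
    (hmu : ∀ α (s : ℝ), mu α s = -((γ : ℂ) - Complex.I * (s : ℂ) * (f α : ℂ)) / 2)
    (H₀ : Matrix (Fin N ⊕ Fin N) (Fin N ⊕ Fin N) ℂ)
    (hH₀ : H₀ = Matrix.fromBlocks 0 1
      (-(Matrix.diagonal (fun α => (lam α : ℂ)))) (-(γ : ℂ) • 1))
    (tL tR : Fin N → ℝ → (Fin N ⊕ Fin N) → ℂ)
    (htLl : ∀ α (s : ℝ) (β : Fin N), tL α s (Sum.inl β) =
      if β = α then Complex.I * (s : ℂ) / (f α : ℂ) * mu α (-s) else 0)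
    (htLr : ∀ α (s : ℝ) (β : Fin N), tL α s (Sum.inr β) =
      if β = α then -(Complex.I * (s : ℂ) / (f α : ℂ)) else 0)
    (htRl : ∀ α (s : ℝ) (β : Fin N), tR α s (Sum.inl β) =
      if β = α then 1 else 0)
    (htRr : ∀ α (s : ℝ) (β : Fin N), tR α s (Sum.inr β) =
      if β = α then mu α s else 0)
    (V₂ : Matrix (Fin N) (Fin N) ℝ) (δγ : ℝ)
    (W : Matrix (Fin N ⊕ Fin N) (Fin N ⊕ Fin N) ℂ)
    (hW : W = Matrix.fromBlocks 0 0 0 (-(δγ : ℂ) • V₂.map Complex.ofReal)) :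
    ∀ (α : Fin N) (s s' : ℝ), (s = 1 ∨ s = -1) → (s' = 1 ∨ s' = -1) →
      (tL α s ⬝ᵥ H₀.mulVec (tR α s') = mu α s * (if s = s' then 1 else 0)) ∧
      (tL α s ⬝ᵥ W.mulVec (tR α s) =
        -(δγ : ℂ) * (1 / 2 + Complex.I * (s : ℂ) * (γ : ℂ) / (2 * (f α : ℂ)))
          * (V₂ α α : ℂ)) := by
  intro α s s' hs hs'
  have hdisc : 0 < 4 * lam α - γ ^ 2 := by linarith [hlam α]
  have hf0 : (f α : ℂ) ≠ 0 := by
    rw [hf, Complex.ofReal_ne_zero]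
    exact (Real.sqrt_pos.2 hdisc).ne'
  have hfsq : (f α : ℂ) ^ 2 = 4 * lam α - γ ^ 2 := by
    rw [hf]
    exact_mod_cast Real.sq_sqrt hdisc.le
  have hs2 : (s : ℂ) ^ 2 = 1 := by rcases hs with rfl | rfl <;> norm_num
  have hmode (s : ℝ) : mu α s = dampedMode γ (f α) s := hmu α s
  have htL := eq_sumElim_single (htLl α s) (htLr α s)
  have htR (s : ℝ) := eq_sumElim_single (htRl α s) (htRr α s)
  subst hH₀ hW
  simp only [htL, htR, sumElim_single_dotProduct_fromBlocks_mulVec_sumElim_single,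
    Matrix.zero_apply, one_apply_eq, Matrix.neg_apply, diagonal_apply_eq, Matrix.smul_apply,
    map_apply, smul_eq_mul, mul_one, hmode, Complex.ofReal_neg]
  rw [← dampedMode_mul_dampedMode_neg hs2 hfsq,
    ← dampedMode_add_dampedMode_neg (γ := γ) (f := f α) (s := s)]
  constructor
  · obtain rfl | rfl : s' = s ∨ s' = -s := by
      rcases hs with rfl | rfl <;> rcases hs' with rfl | rfl <;> norm_num
    · rw [if_pos rfl, mul_one]
      exact companion_sandwich_self (div_mul_dampedMode_neg_sub_dampedMode hs2 hf0)
    · rw [if_neg (by rcases hs with rfl | rfl <;> norm_num), mul_zero, Complex.ofReal_neg]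
      exact companion_sandwich_other _
  · rw [vec2_dotProduct_mulVec_vec2]
    linear_combination (δγ * V₂ α α : ℂ) * div_mul_dampedMode (γ := γ) hs2 hf0

/-- Equation (43) of the paper: the left/right eigenvectors `t^{(0)L}_{αs}`,
`t^{(0)R}_{αs}` of the block-diagonal unperturbed state matrix
`H₀ = [[0, I], [−Λ, −γI]]` (supported on the coordinate pair `(α, N+α)`, with
eigenvalues `μ_{αs} = −(γ − i s f_α)/2`, `f_α = √(4λ_α − γ²)`) satisfy
`t^{(0)L}_{αs} H₀ t^{(0)R}_{αs'} = μ_{αs} δ_{ss'}`, and the first-order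
eigenvalue shift induced by the damping-inhomogeneity perturbation
`W = [[0, 0], [0, −δγ V₂]]` is
`t^{(0)L}_{αs} W t^{(0)R}_{αs} = −δγ (1/2 + i s γ/(2 f_α)) (V₂)_{αα}`. -/
theorem stmt_14 (N : ℕ) (hN : 1 ≤ N) (γ : ℝ) (hγ : 0 < γ)
    (lam : Fin N → ℝ) (hlam : ∀ α, γ ^ 2 / 4 < lam α)
    (f : Fin N → ℝ) (hf : ∀ α, f α = Real.sqrt (4 * lam α - γ ^ 2))
    (mu : Fin N → ℝ → ℂ)
    (hmu : ∀ α (s : ℝ), mu α s = -((γ : ℂ) - Complex.I * (s : ℂ) * (f α : ℂ)) / 2)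
    (H₀ : Matrix (Fin N ⊕ Fin N) (Fin N ⊕ Fin N) ℂ)
    (hH₀ : H₀ = Matrix.fromBlocks 0 1
      (-(Matrix.diagonal (fun α => (lam α : ℂ)))) (-(γ : ℂ) • 1))
    (tL tR : Fin N → ℝ → (Fin N ⊕ Fin N) → ℂ)
    (htLl : ∀ α (s : ℝ) (β : Fin N), tL α s (Sum.inl β) =
      if β = α then Complex.I * (s : ℂ) / (f α : ℂ) * mu α (-s) else 0)
    (htLr : ∀ α (s : ℝ) (β : Fin N), tL α s (Sum.inr β) =
      if β = α then -(Complex.I * (s : ℂ) / (f α : ℂ)) else 0)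
    (htRl : ∀ α (s : ℝ) (β : Fin N), tR α s (Sum.inl β) =
      if β = α then 1 else 0)
    (htRr : ∀ α (s : ℝ) (β : Fin N), tR α s (Sum.inr β) =
      if β = α then mu α s else 0)
    (V₂ : Matrix (Fin N) (Fin N) ℝ) (hV₂ : V₂.IsSymm) (δγ : ℝ)
    (W : Matrix (Fin N ⊕ Fin N) (Fin N ⊕ Fin N) ℂ)
    (hW : W = Matrix.fromBlocks 0 0 0 (-(δγ : ℂ) • V₂.map Complex.ofReal)) :
    ∀ (α : Fin N) (s s' : ℝ), (s = 1 ∨ s = -1) → (s' = 1 ∨ s' = -1) →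
      (tL α s ⬝ᵥ H₀.mulVec (tR α s') = mu α s * (if s = s' then 1 else 0)) ∧
      (tL α s ⬝ᵥ W.mulVec (tR α s) =
        -(δγ : ℂ) * (1 / 2 + Complex.I * (s : ℂ) * (γ : ℂ) / (2 * (f α : ℂ)))
          * (V₂ α α : ℂ)) :=
  stmt_14_general N γ lam hlam f hf mu hmu H₀ hH₀ tL tR htLl htLr htRl htRr V₂ δγ W hW
end

section
/- Let N ≥ 2, γ > 0, and λ_α > γ²/4 pairwise distinct for α ∈ {2, …, N}; set f_α = √(4λ_α − γ²), s_α(t) = sin(f_α t/2), c_α(t) = cos(f_α t/2). Let 𝒫_β ∈ ℝ and V a real symmetric matrix with entries V_{αβ} (α, β ∈ {2, …, N}). Fix α and define ξ̇⁰_β(t) = (2𝒫_β/f_β)·e^{−γt/2}·s_β(t) for each β, and D(t) = (𝒫_α/f_α)·e^{−γt/2}·[2·s_α(t)·(γ²/f_α²)·V_{αα} − γt·V_{αα}·(s_α(t) + (γ/f_α)·c_α(t))] + γ·Σ_{β≠α, 2≤β≤N} (V_{αβ}·𝒫_β/(λ_α − λ_β))·e^{−γt/2}·[(γ/f_β)·s_β(t)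 − (γ/f_α)·s_α(t) + c_α(t) − c_β(t)]. Then D(0) = 0 and for all t ≥ 0: D'(t) + γ·D(t) + λ_α·∫₀^t D(s) ds = −γ·Σ_{β=2}^{N} V_{αβ}·ξ̇⁰_β(t). -/
/-!
Write `R_κ u = u' + γ u + κ ∫₀ᵗ u`. For `f² + γ² = 4μ`, a damped wave
`e^{-γt/2} (a sin (ft/2) + b cos (ft/2))` is the derivative of another damped wave `W` of the
same frequency, and `W'' + γ W' + μ W = 0` because `(-γ ± i f)/2` are the roots of
`z² + γ z + μ`. Hence `R_κ` sends a damped wave to `(κ - μ) W` plus a constant, and `R_μ` sends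
`t` times a damped wave to a damped wave plus a constant. Since `R_κ` is linear, `R_{λ_α} D` is
computed term by term: each coupling term `β ≠ α` (frequencies `f_α`, `f_β`) contributes
`-γ V_{αβ} ξ̇⁰_β`, and the resonant term `β = α`, which carries the secular factor `t`,
contributes `-γ V_{αα} ξ̇⁰_α`; all constants cancel.
-/

open Real

noncomputable def dampedWave (γ f a b t : ℝ) : ℝ :=
  exp (-γ * t / 2) * (a * sin (f * t / 2) + b * cos (f * t / 2))

noncomputable def dampedResidual (γ κ : ℝ) (u : ℝ → ℝ) (t : ℝ) : ℝ :=
  deriv u t + γ * u t + κ * ∫ s in (0 : ℝ)..t, u s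

@[fun_prop]
theorem differentiable_dampedWave (γ f a b : ℝ) : Differentiable ℝ (dampedWave γ f a b) := by
  unfold dampedWave; fun_prop

theorem hasDerivAt_dampedWave (γ f a b t : ℝ) :
    HasDerivAt (dampedWave γ f a b)
      (dampedWave γ f (-(γ * a + f * b) / 2) ((f * a - γ * b) / 2) t) t := by
  have hexp : HasDerivAt (fun s : ℝ => -γ * s / 2) (-γ / 2) t := by
    simpa using ((hasDerivAt_id t).const_mul (-γ)).div_const 2
  have hphase : HasDerivAt (fun s : ℝ => f * s / 2) (f / 2) t := by
    simpa using ((hasDerivAt_id t).const_mul f).div_const 2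
  refine (hexp.exp.fun_mul ((hphase.sin.const_mul a).fun_add (hphase.cos.const_mul b))).congr_deriv
    ?_
  simp only [dampedWave]
  ring

theorem hasDerivAt_dampedWave_primitive {γ f μ : ℝ} (h : f ^ 2 + γ ^ 2 = 4 * μ) (hμ : μ ≠ 0)
    (a b t : ℝ) :
    HasDerivAt (dampedWave γ f ((f * b - γ * a) / (2 * μ)) (-(f * a + γ * b) / (2 * μ)))
      (dampedWave γ f a b t) t := by
  convert hasDerivAt_dampedWave γ f _ _ t using 2
  · field_simp
    linear_combination (-a) * h
  · field_simp
    linear_combination (-b) * h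

theorem dampedResidual_eq_of_hasDerivAt {y u u' : ℝ → ℝ} (hy : ∀ t, HasDerivAt y (u t) t)
    (hu : ∀ t, HasDerivAt u (u' t) t) (γ κ t : ℝ) :
    dampedResidual γ κ u t = u' t + γ * u t + κ * (y t - y 0) := by
  have hcont : Continuous u := continuous_iff_continuousAt.2 fun s => (hu s).continuousAt
  rw [dampedResidual, (hu t).deriv, intervalIntegral.integral_eq_sub_of_hasDerivAt
    (fun s _ => hy s) (hcont.intervalIntegrable _ _)]

theorem dampedResidual_add {u v : ℝ → ℝ} (hu : Differentiable ℝ u) (hv : Differentiable ℝ v)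
    (γ κ t : ℝ) :
    dampedResidual γ κ (fun s => u s + v s) t =
      dampedResidual γ κ u t + dampedResidual γ κ v t := by
  simp only [dampedResidual]
  rw [deriv_fun_add (hu t) (hv t), intervalIntegral.integral_add
    (hu.continuous.intervalIntegrable _ _) (hv.continuous.intervalIntegrable _ _)]
  ring

theorem dampedResidual_const_mul (u : ℝ → ℝ) (γ κ c t : ℝ) :
    dampedResidual γ κ (fun s => c * u s) t = c * dampedResidual γ κ u t := by
  simp only [dampedResidual, deriv_const_mul_field', intervalIntegral.integral_const_mul]
  ring

theorem dampedResidual_sum {ι : Type*} (S : Finset ι) {u : ι → ℝ → ℝ}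
    (hu : ∀ i ∈ S, Differentiable ℝ (u i)) (γ κ t : ℝ) :
    dampedResidual γ κ (fun s => ∑ i ∈ S, u i s) t = ∑ i ∈ S, dampedResidual γ κ (u i) t := by
  simp only [dampedResidual]
  rw [deriv_fun_sum fun i hi => (hu i hi).differentiableAt,
    intervalIntegral.integral_finsetSum fun i hi => (hu i hi).continuous.intervalIntegrable _ _,
    Finset.mul_sum, Finset.mul_sum, ← Finset.sum_add_distrib, ← Finset.sum_add_distrib]

theorem dampedResidual_dampedWave {γ f μ : ℝ} (h : f ^ 2 + γ ^ 2 = 4 * μ) (hμ : μ ≠ 0)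
    (κ a b t : ℝ) :
    dampedResidual γ κ (dampedWave γ f a b) t =
      (κ - μ) * dampedWave γ f ((f * b - γ * a) / (2 * μ)) (-(f * a + γ * b) / (2 * μ)) t
        + κ * (f * a + γ * b) / (2 * μ) := by
  rw [dampedResidual_eq_of_hasDerivAt (hasDerivAt_dampedWave_primitive h hμ a b)
    (hasDerivAt_dampedWave γ f a b)]
  obtain rfl : μ = (f ^ 2 + γ ^ 2) / 4 := by linarith
  have h0 : f ^ 2 + γ ^ 2 ≠ 0 := by contrapose! hμ; rw [hμ]; norm_num
  simp only [dampedWave, mul_zero, zero_div, exp_zero, sin_zero, cos_zero]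
  field_simp
  ring

theorem dampedResidual_mul_dampedWave {γ f μ : ℝ} (h : f ^ 2 + γ ^ 2 = 4 * μ) (hμ : μ ≠ 0)
    (a b t : ℝ) :
    dampedResidual γ μ (fun s => s * dampedWave γ f a b s) t =
      f / (2 * μ) * dampedWave γ f (f * a + γ * b) (f * b - γ * a) t
        + (2 * f * γ * a + (γ ^ 2 - f ^ 2) * b) / (4 * μ) := by
  have hW := hasDerivAt_dampedWave_primitive h hμ a b
  have hW' := hasDerivAt_dampedWave_primitive h hμ
    ((f * b - γ * a) / (2 * μ)) (-(f * a + γ * b) / (2 * μ))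
  have hy : ∀ s, HasDerivAt _ (s * dampedWave γ f a b s) s := fun s =>
    (((hasDerivAt_id s).fun_mul (hW s)).fun_sub (hW' s)).congr_deriv (by simp only [id_eq]; ring)
  have hu : ∀ s, HasDerivAt (fun s => s * dampedWave γ f a b s)
      (dampedWave γ f a b s
        + s * dampedWave γ f (-(γ * a + f * b) / 2) ((f * a - γ * b) / 2) s) s := fun s => by
    simpa using (hasDerivAt_id s).fun_mul (hasDerivAt_dampedWave γ f a b s)
  rw [dampedResidual_eq_of_hasDerivAt hy hu]
  obtain rfl : μ = (f ^ 2 + γ ^ 2) / 4 := by linarith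
  have h0 : f ^ 2 + γ ^ 2 ≠ 0 := by contrapose! hμ; rw [hμ]; norm_num
  simp only [id_eq, dampedWave, mul_zero, zero_div, exp_zero, sin_zero, cos_zero]
  field_simp
  ring

theorem sq_add_sq_eq_and_pos_of_eq_sqrt {γ l f : ℝ} (hl : γ ^ 2 / 4 < l)
    (hf : f = √(4 * l - γ ^ 2)) : f ^ 2 + γ ^ 2 = 4 * l ∧ 0 < f := by
  have hpos : 0 < 4 * l - γ ^ 2 := by linarith
  refine ⟨?_, hf ▸ Real.sqrt_pos.2 hpos⟩
  rw [hf, Real.sq_sqrt hpos.le]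
  ring

-- The resonant (`β = α`) and the coupling (`β ≠ α`) parts of `D` in (44).
noncomputable def diagonalCorrection (γ f W P t : ℝ) : ℝ :=
  (P / f) * exp (-γ * t / 2) *
    (2 * sin (f * t / 2) * (γ ^ 2 / f ^ 2) * W
      - γ * t * W * (sin (f * t / 2) + (γ / f) * cos (f * t / 2)))

noncomputable def crossCorrection (γ fα fβ κ μ W P t : ℝ) : ℝ :=
  (W * P / (κ - μ)) * exp (-γ * t / 2) *
    ((γ / fβ) * sin (fβ * t / 2) - (γ / fα) * sin (fα * t / 2)
      + cos (fα * t / 2) - cos (fβ * t / 2))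

theorem dampedResidual_diagonalCorrection {γ f μ : ℝ} (h : f ^ 2 + γ ^ 2 = 4 * μ) (hf : f ≠ 0)
    (W P t : ℝ) :
    dampedResidual γ μ (diagonalCorrection γ f W P) t =
      -γ * (W * dampedWave γ f (2 * P / f) 0 t) := by
  have hμ : μ ≠ 0 := by nlinarith [sq_pos_of_ne_zero hf, sq_nonneg γ]
  have hsplit : diagonalCorrection γ f W P = fun s =>
      dampedWave γ f (2 * P * γ ^ 2 * W / f ^ 3) 0 s
        + s * dampedWave γ f (-(P * γ * W / f)) (-(P * γ ^ 2 * W / f ^ 2)) s := by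
    funext s
    simp only [diagonalCorrection, dampedWave]
    ring
  rw [hsplit, dampedResidual_add (by fun_prop) (by fun_prop), dampedResidual_dampedWave h hμ,
    dampedResidual_mul_dampedWave h hμ]
  obtain rfl : μ = (f ^ 2 + γ ^ 2) / 4 := by linarith
  have h0 : f ^ 2 + γ ^ 2 ≠ 0 := by contrapose! hμ; rw [hμ]; norm_num
  simp only [dampedWave]
  field_simp
  ring

theorem dampedResidual_crossCorrection {γ fα fβ κ μ : ℝ} (hα : fα ^ 2 + γ ^ 2 = 4 * κ)
    (hβ : fβ ^ 2 + γ ^ 2 = 4 * μ) (hfα : fα ≠ 0) (hfβ : fβ ≠ 0) (hκμ : κ ≠ μ) (W P t : ℝ) :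
    dampedResidual γ κ (crossCorrection γ fα fβ κ μ W P) t =
      -(W * dampedWave γ fβ (2 * P / fβ) 0 t) := by
  have hκ : κ ≠ 0 := by nlinarith [sq_pos_of_ne_zero hfα, sq_nonneg γ]
  have hμ : μ ≠ 0 := by nlinarith [sq_pos_of_ne_zero hfβ, sq_nonneg γ]
  have hsplit : crossCorrection γ fα fβ κ μ W P = fun s =>
      W * P / (κ - μ) * (dampedWave γ fβ (γ / fβ) (-1) s + dampedWave γ fα (-(γ / fα)) 1 s) := by
    funext s
    simp only [crossCorrection, dampedWave]
    ring
  rw [hsplit, dampedResidual_const_mul, dampedResidual_add (by fun_prop) (by fun_prop),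
    dampedResidual_dampedWave hβ hμ, dampedResidual_dampedWave hα hκ]
  obtain rfl : κ = (fα ^ 2 + γ ^ 2) / 4 := by linarith
  obtain rfl : μ = (fβ ^ 2 + γ ^ 2) / 4 := by linarith
  have hα0 : fα ^ 2 + γ ^ 2 ≠ 0 := by contrapose! hκ; rw [hκ]; norm_num
  have hβ0 : fβ ^ 2 + γ ^ 2 ≠ 0 := by contrapose! hμ; rw [hμ]; norm_num
  have hsub : fα ^ 2 - fβ ^ 2 ≠ 0 := by contrapose! hκμ; linarith
  rw [show (fα ^ 2 + γ ^ 2) / 4 - (fβ ^ 2 + γ ^ 2) / 4 = (fα ^ 2 - fβ ^ 2) / 4 by ring]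
  simp only [dampedWave]
  field_simp
  ring

theorem stmt_16_general (N : ℕ) (γ : ℝ)
    (lam : ℕ → ℝ) (hlam : ∀ α ∈ Finset.Icc 2 N, γ ^ 2 / 4 < lam α)
    (hdist : ∀ α ∈ Finset.Icc 2 N, ∀ β ∈ Finset.Icc 2 N, α ≠ β → lam α ≠ lam β)
    (f : ℕ → ℝ) (hf : ∀ α, f α = Real.sqrt (4 * lam α - γ ^ 2))
    (P : ℕ → ℝ) (V : ℕ → ℕ → ℝ)
    (α : ℕ) (hα : α ∈ Finset.Icc 2 N)
    (ξ0 : ℕ → ℝ → ℝ)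
    (hξ0 : ∀ (β : ℕ) (t : ℝ), ξ0 β t =
      (2 * P β / f β) * Real.exp (-γ * t / 2) * Real.sin (f β * t / 2))
    (D : ℝ → ℝ)
    (hD : ∀ t : ℝ, D t =
      (P α / f α) * Real.exp (-γ * t / 2) *
        (2 * Real.sin (f α * t / 2) * (γ ^ 2 / (f α) ^ 2) * V α α
          - γ * t * V α α *
            (Real.sin (f α * t / 2) + (γ / f α) * Real.cos (f α * t / 2)))
      + γ * ∑ β ∈ (Finset.Icc 2 N).erase α,
          (V α β * P β / (lam α - lam β)) * Real.exp (-γ * t / 2) *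
            ((γ / f β) * Real.sin (f β * t / 2)
              - (γ / f α) * Real.sin (f α * t / 2)
              + Real.cos (f α * t / 2) - Real.cos (f β * t / 2))) :
    D 0 = 0 ∧
    ∀ t : ℝ, 0 ≤ t →
      deriv D t + γ * D t + lam α * ∫ s in (0 : ℝ)..t, D s
        = -γ * ∑ β ∈ Finset.Icc 2 N, V α β * ξ0 β t := by
  have hfreq : ∀ β ∈ Finset.Icc 2 N, f β ^ 2 + γ ^ 2 = 4 * lam β ∧ f β ≠ 0 := fun β hβ =>
    (sq_add_sq_eq_and_pos_of_eq_sqrt (hlam β hβ) (hf β)).imp_right ne_of_gt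
  obtain ⟨hα2, hfα⟩ := hfreq α hα
  refine ⟨by simp [hD], fun t _ => ?_⟩
  have hcross : ∀ β ∈ (Finset.Icc 2 N).erase α,
      dampedResidual γ (lam α) (crossCorrection γ (f α) (f β) (lam α) (lam β) (V α β) (P β)) t
        = -(V α β * ξ0 β t) := fun β hβ => by
    obtain ⟨hne, hβI⟩ := Finset.mem_erase.1 hβ
    obtain ⟨hβ2, hfβ⟩ := hfreq β hβI
    rw [dampedResidual_crossCorrection hα2 hβ2 hfα hfβ (hdist α hα β hβI hne.symm), hξ0,
      dampedWave]
    ring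
  have hDeq : D = fun t => diagonalCorrection γ (f α) (V α α) (P α) t
      + γ * ∑ β ∈ (Finset.Icc 2 N).erase α,
        crossCorrection γ (f α) (f β) (lam α) (lam β) (V α β) (P β) t := funext hD
  change dampedResidual γ (lam α) D t = _
  rw [hDeq, dampedResidual_add (by unfold diagonalCorrection; fun_prop)
      (by unfold crossCorrection; fun_prop), dampedResidual_const_mul,
    dampedResidual_sum _ fun β _ => by unfold crossCorrection; fun_prop,
    Finset.sum_congr rfl hcross, dampedResidual_diagonalCorrection hα2 hfα,
    ← Finset.add_sum_erase _ _ hα, hξ0, dampedWave, Finset.sum_neg_distrib]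
  ring

/-- Verification of Proposition 4 of the paper: the first-order correction
`D = ξ̇¹_α` to the mode frequency in equation (44) satisfies the first-order
variational equation (written in integrated form)
`D'(t) + γ D(t) + λ_α ∫₀^t D(s) ds = −γ Σ_β V_{αβ} ξ̇⁰_β(t)` for `t ≥ 0`,
with `D(0) = 0`, where `ξ̇⁰_β` is the unperturbed solution of Proposition 1. -/
theorem stmt_16 (N : ℕ) (hN : 2 ≤ N) (γ : ℝ) (hγ : 0 < γ)
    (lam : ℕ → ℝ) (hlam : ∀ α ∈ Finset.Icc 2 N, γ ^ 2 / 4 < lam α)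
    (hdist : ∀ α ∈ Finset.Icc 2 N, ∀ β ∈ Finset.Icc 2 N, α ≠ β → lam α ≠ lam β)
    (f : ℕ → ℝ) (hf : ∀ α, f α = Real.sqrt (4 * lam α - γ ^ 2))
    (P : ℕ → ℝ) (V : ℕ → ℕ → ℝ) (hV : ∀ α β, V α β = V β α)
    (α : ℕ) (hα : α ∈ Finset.Icc 2 N)
    (ξ0 : ℕ → ℝ → ℝ)
    (hξ0 : ∀ (β : ℕ) (t : ℝ), ξ0 β t =
      (2 * P β / f β) * Real.exp (-γ * t / 2) * Real.sin (f β * t / 2))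
    (D : ℝ → ℝ)
    (hD : ∀ t : ℝ, D t =
      (P α / f α) * Real.exp (-γ * t / 2) *
        (2 * Real.sin (f α * t / 2) * (γ ^ 2 / (f α) ^ 2) * V α α
          - γ * t * V α α *
            (Real.sin (f α * t / 2) + (γ / f α) * Real.cos (f α * t / 2)))
      + γ * ∑ β ∈ (Finset.Icc 2 N).erase α,
          (V α β * P β / (lam α - lam β)) * Real.exp (-γ * t / 2) *
            ((γ / f β) * Real.sin (f β * t / 2)
              - (γ / f α) * Real.sin (f α * t / 2)
              + Real.cos (f α * t / 2) - Real.cos (f β * t / 2))) :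
    D 0 = 0 ∧
    ∀ t : ℝ, 0 ≤ t →
      deriv D t + γ * D t + lam α * ∫ s in (0 : ℝ)..t, D s
        = -γ * ∑ β ∈ Finset.Icc 2 N, V α β * ξ0 β t :=
  stmt_16_general N γ lam hlam hdist f hf P V α hα ξ0 hξ0 D hD
end
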